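/- arXiv:1406.3223 — 4 statements merged into one kernel-verified Lean document; each statement's English description precedes it below -/
import Mathlib

section
/- Suppose S ∩ H = ∅. Then all vertices of H lie in the same connected component of the pair graph G(G,H,S) if and only if the subgroup of H generated by H ∩ (S·S⁻¹) equals H, where S·S⁻¹ = { s t⁻¹ : s, t ∈ S }. -/
/-!
Write `K` for the subgroup generated by `H ∩ S * S⁻¹`. Every edge joins some `h ∈ H` to `h * s ∉ H`,
and left multiplication by elements of `H` is an automorphism of the graph, so it suffices to show
that for `h ∈ H`, the vertex `h` is reachable from `1` iff `h ∈ K`.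
If `g = s * t⁻¹ ∈ H` then `1 — s = g * t — g` is a path, and the vertices reachable from `1` inside
`H` form a subgroup; hence they contain `K`. Conversely, `K ∪ K * S` is closed under adjacency:
the only way to leave `k * t` towards `H` is an edge `h — h * s = k * t`, and then
`k⁻¹ * h = t * s⁻¹ ∈ H ∩ S * S⁻¹`.
-/

open scoped Pointwise Classical

def pairGraph {G : Type*} [Group G] (H : Subgroup G) (S : Set G) : SimpleGraph G :=
  SimpleGraph.fromRel (fun x y => ∃ h ∈ (H : Set G), ∃ s ∈ S, x = h ∧ y = h * s)

theorem SimpleGraph.Reachable.mem_of_adj_closed {V : Type*} {Γ : SimpleGraph V} {C : Set V}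
    (hC : ∀ ⦃x y⦄, Γ.Adj x y → x ∈ C → y ∈ C) {x y : V} (hxy : Γ.Reachable x y) (hx : x ∈ C) :
    y ∈ C := by
  rw [SimpleGraph.reachable_iff_reflTransGen] at hxy
  induction hxy with
  | refl => exact hx
  | tail _ hyz ih => exact hC hyz ih

namespace pairGraph

variable {G : Type*} [Group G] {H : Subgroup G} {S : Set G}

theorem adj_mul {h s : G} (hh : h ∈ H) (hs : s ∈ S) (hs₁ : s ≠ 1) :
    (pairGraph H S).Adj h (h * s) :=
  ⟨by simpa using hs₁, Or.inl ⟨h, hh, s, hs, rfl, rfl⟩⟩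

theorem adj_mul_left {a x y : G} (ha : a ∈ H) (hxy : (pairGraph H S).Adj x y) :
    (pairGraph H S).Adj (a * x) (a * y) := by
  obtain ⟨hne, ⟨h, hh, s, hs, hx, hy⟩ | ⟨h, hh, s, hs, hy, hx⟩⟩ := hxy <;> subst x y
  · exact ⟨by simpa using hne, Or.inl ⟨a * h, mul_mem ha hh, s, hs, rfl, (mul_assoc ..).symm⟩⟩
  · exact ⟨by simpa using hne, Or.inr ⟨a * h, mul_mem ha hh, s, hs, rfl, (mul_assoc ..).symm⟩⟩

theorem reachable_mul_left {a x y : G} (ha : a ∈ H) (hxy : (pairGraph H S).Reachable x y) :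
    (pairGraph H S).Reachable (a * x) (a * y) :=
  hxy.map ⟨(a * ·), adj_mul_left ha⟩

theorem reachable_iff_reachable_one {h₁ h₂ : G} (hh₁ : h₁ ∈ H) :
    (pairGraph H S).Reachable h₁ h₂ ↔ (pairGraph H S).Reachable 1 (h₁⁻¹ * h₂) :=
  ⟨fun h => by simpa using reachable_mul_left (H.inv_mem hh₁) h,
    fun h => by simpa using reachable_mul_left hh₁ h⟩

variable (H S) in
def diffSubgroup : Subgroup G :=
  Subgroup.closure ((H : Set G) ∩ (S * S⁻¹))

theorem diffSubgroup_le : diffSubgroup H S ≤ H :=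
  (Subgroup.closure_le H).mpr Set.inter_subset_left

theorem reachable_one_of_mem_diffSubgroup (hSH : Disjoint S H) {g : G}
    (hg : g ∈ diffSubgroup H S) : (pairGraph H S).Reachable 1 g := by
  have hS₁ {s : G} (hs : s ∈ S) : s ≠ 1 := fun h => hSH.notMem_of_mem_left hs (h ▸ H.one_mem)
  induction hg using Subgroup.closure_induction with
  | mem g hg =>
    obtain ⟨hgH, s, hs, t, ht, rfl⟩ := hg
    rw [Set.mem_inv] at ht
    have h1s : (pairGraph H S).Adj 1 s := by simpa using adj_mul H.one_mem hs (hS₁ hs)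
    have hgs : (pairGraph H S).Adj (s * t) s := by simpa using adj_mul hgH ht (hS₁ ht)
    exact h1s.reachable.trans hgs.reachable.symm
  | one => rfl
  | mul g₁ g₂ hg₁ _ ih₁ ih₂ =>
    exact ih₁.trans (by simpa using reachable_mul_left (diffSubgroup_le hg₁) ih₂)
  | inv g hg ih =>
    simpa using (reachable_mul_left (H.inv_mem (diffSubgroup_le hg)) ih).symm

theorem mem_diffSubgroup_union_of_adj (hSH : Disjoint S H) ⦃x y : G⦄
    (hxy : (pairGraph H S).Adj x y) (hx : x ∈ (diffSubgroup H S : Set G) ∪ diffSubgroup H S * S) :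
    y ∈ (diffSubgroup H S : Set G) ∪ diffSubgroup H S * S := by
  obtain ⟨-, ⟨h, hh, s, hs, hx', hy'⟩ | ⟨h, hh, s, hs, hy', hx'⟩⟩ := hxy <;> subst x y
  · obtain hhK | ⟨k, hk, t, ht, rfl⟩ := hx
    · exact Or.inr (Set.mul_mem_mul hhK hs)
    · exact absurd ((mul_mem_cancel_left (diffSubgroup_le hk)).mp hh) (hSH.notMem_of_mem_left ht)
  · obtain hK | ⟨k, hk, t, ht, hkt⟩ := hx
    · exact absurd ((mul_mem_cancel_left hh).mp (diffSubgroup_le hK)) (hSH.notMem_of_mem_left hs)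
    · have hts : k⁻¹ * h = t * s⁻¹ := by
        rw [inv_mul_eq_iff_eq_mul, ← mul_assoc, eq_mul_inv_iff_mul_eq]
        exact hkt.symm
      have hgen : k⁻¹ * h ∈ diffSubgroup H S := Subgroup.subset_closure
        ⟨mul_mem (H.inv_mem (diffSubgroup_le hk)) hh,
          hts ▸ Set.mul_mem_mul ht (Set.inv_mem_inv.mpr hs)⟩
      exact Or.inl (by simpa using mul_mem hk hgen)

theorem mem_diffSubgroup_of_reachable_one (hSH : Disjoint S H) {h : G} (hh : h ∈ H)
    (hreach : (pairGraph H S).Reachable 1 h) : h ∈ diffSubgroup H S := by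
  obtain hK | ⟨k, hk, s, hs, rfl⟩ :=
    hreach.mem_of_adj_closed (mem_diffSubgroup_union_of_adj hSH) (Or.inl (one_mem _))
  · exact hK
  · exact absurd ((mul_mem_cancel_left (diffSubgroup_le hk)).mp hh) (hSH.notMem_of_mem_left hs)

theorem reachable_iff_inv_mul_mem_diffSubgroup (hSH : Disjoint S H) {h₁ h₂ : G}
    (hh₁ : h₁ ∈ H) (hh₂ : h₂ ∈ H) :
    (pairGraph H S).Reachable h₁ h₂ ↔ h₁⁻¹ * h₂ ∈ diffSubgroup H S := by
  rw [reachable_iff_reachable_one hh₁]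
  exact ⟨mem_diffSubgroup_of_reachable_one hSH (mul_mem (H.inv_mem hh₁) hh₂),
    reachable_one_of_mem_diffSubgroup hSH⟩

end pairGraph

theorem pairGraph_subgroup_connected_iff_general {G : Type*} [Group G]
    (H : Subgroup G) (S : Set G) (hSH : S ∩ (H : Set G) = ∅) :
    (∀ h₁ h₂ : G, h₁ ∈ H → h₂ ∈ H → (pairGraph H S).Reachable h₁ h₂) ↔
      Subgroup.closure ((H : Set G) ∩ (S * S⁻¹)) = H := by
  have hSH' : Disjoint S H := Set.disjoint_iff_inter_eq_empty.mpr hSH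
  change _ ↔ pairGraph.diffSubgroup H S = H
  constructor
  · intro hall
    refine le_antisymm pairGraph.diffSubgroup_le fun h hh => ?_
    simpa using (pairGraph.reachable_iff_inv_mul_mem_diffSubgroup hSH' H.one_mem hh).mp
      (hall 1 h H.one_mem hh)
  · intro hK h₁ h₂ hh₁ hh₂
    rw [pairGraph.reachable_iff_inv_mul_mem_diffSubgroup hSH' hh₁ hh₂, hK]
    exact mul_mem (H.inv_mem hh₁) hh₂

/-- if `S ∩ H = ∅`, all vertices of `H` lie in the same connected
component of the pair graph iff `⟨H ∩ S·S⁻¹⟩ = H`. -/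
theorem pairGraph_subgroup_connected_iff {G : Type*} [Group G] [Fintype G]
    (H : Subgroup G) (S : Set G) (hSH : S ∩ (H : Set G) = ∅) :
    (∀ h₁ h₂ : G, h₁ ∈ H → h₂ ∈ H → (pairGraph H S).Reachable h₁ h₂) ↔
      Subgroup.closure ((H : Set G) ∩ (S * S⁻¹)) = H :=
  pairGraph_subgroup_connected_iff_general H S hSH
end

section
/- The pair graph G(G,H,S) is connected if and only if ⟨H ∩ ((S ∩ H) ∪ S_O·S_O⁻¹)⟩ = H and S contains a representative of every right coset of H other than H, where S_O = S \ H. -/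
/-!
Left multiplication by elements of `H` acts on the pair graph by automorphisms. Every vertex
outside `H` has all its neighbours in `H`, and passing through a vertex `h s` with `s ∈ S \ H`
from `h` to `h s t⁻¹` (with `t ∈ S \ H`) multiplies by `s t⁻¹`. Hence the component of `1` is
`K ∪ K (S \ H)`, where `K` is the subgroup generated by `H ∩ ((S ∩ H) ∪ S_O S_O⁻¹)`, and this
is everything exactly when `K = H` and `K (S \ H)` meets every coset `H x` with `x ∉ H`.
-/

open scoped Pointwise Classical

section PairGraph

variable {G : Type*} [Group G] {H : Subgroup G} {S : Set G}

variable (H S) in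
def pairGenerators : Set G :=
  (H : Set G) ∩ ((S ∩ (H : Set G)) ∪ ((S \ (H : Set G)) * (S \ (H : Set G))⁻¹))

variable (H S) in
def pairComponent : Set G :=
  {x | x ∈ Subgroup.closure (pairGenerators H S) ∨
    ∃ t ∈ S \ (H : Set G), x * t⁻¹ ∈ Subgroup.closure (pairGenerators H S)}

lemma closure_pairGenerators_le : Subgroup.closure (pairGenerators H S) ≤ H :=
  (Subgroup.closure_le _).2 Set.inter_subset_left

lemma pairGraph_adj_mul_left {g x y : G} (hg : g ∈ H) (hxy : (pairGraph H S).Adj x y) :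
    (pairGraph H S).Adj (g * x) (g * y) := by
  rw [pairGraph, SimpleGraph.fromRel_adj] at hxy ⊢
  obtain ⟨hne, ⟨h, hh, s, hs, hx, hy⟩ | ⟨h, hh, s, hs, hy, hx⟩⟩ := hxy
  · refine ⟨by simpa using hne, .inl ⟨g * h, H.mul_mem hg hh, s, hs, ?_, ?_⟩⟩ <;>
      simp [hx, hy, mul_assoc]
  · refine ⟨by simpa using hne, .inr ⟨g * h, H.mul_mem hg hh, s, hs, ?_, ?_⟩⟩ <;>
      simp [hx, hy, mul_assoc]

lemma pairGraph_reachable_mul_left {g x y : G} (hg : g ∈ H)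
    (hxy : (pairGraph H S).Reachable x y) :
    (pairGraph H S).Reachable (g * x) (g * y) :=
  hxy.map ⟨(g * ·), pairGraph_adj_mul_left hg⟩

lemma pairGraph_reachable_mul {h s : G} (hh : h ∈ H) (hs : s ∈ S) :
    (pairGraph H S).Reachable h (h * s) := by
  by_cases heq : h = h * s
  · exact heq ▸ .rfl
  · exact SimpleGraph.Adj.reachable <|
      (SimpleGraph.fromRel_adj _ _ _).2 ⟨heq, .inl ⟨h, hh, s, hs, rfl, rfl⟩⟩

lemma pairGraph_reachable_one_of_mem_closure {k : G}
    (hk : k ∈ Subgroup.closure (pairGenerators H S)) : (pairGraph H S).Reachable 1 k := by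
  induction hk using Subgroup.closure_induction with
  | mem t ht =>
    obtain ⟨htH, ⟨htS, -⟩ | ⟨s, ⟨hsS, -⟩, u, ⟨huS, -⟩, rfl⟩⟩ := ht
    · simpa using pairGraph_reachable_mul H.one_mem htS
    · have hsu : (pairGraph H S).Reachable (s * u) s := by
        simpa using pairGraph_reachable_mul (S := S) htH huS
      have hs : (pairGraph H S).Reachable 1 s := by
        simpa using pairGraph_reachable_mul H.one_mem hsS
      exact hs.trans hsu.symm
  | one => exact .rfl
  | mul x y hx _ ihx ihy =>
    exact ihx.trans (by simpa using pairGraph_reachable_mul_left (closure_pairGenerators_le hx) ihy)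
  | inv x hx ih =>
    have hx' := H.inv_mem (closure_pairGenerators_le hx)
    simpa using (pairGraph_reachable_mul_left hx' ih).symm

lemma mem_pairComponent_iff_of_mem {h : G} (hh : h ∈ H) :
    h ∈ pairComponent H S ↔ h ∈ Subgroup.closure (pairGenerators H S) := by
  refine or_iff_left ?_
  rintro ⟨t, ⟨-, htH⟩, hK⟩
  exact htH (by simpa using (H.mul_mem_cancel_left hh).1 (closure_pairGenerators_le hK))

lemma mul_mem_pairComponent_iff {h s : G} (hh : h ∈ H) (hs : s ∈ S) :
    h * s ∈ pairComponent H S ↔ h ∈ pairComponent H S := by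
  set K := Subgroup.closure (pairGenerators H S)
  rw [mem_pairComponent_iff_of_mem hh]
  by_cases hsH : s ∈ H
  · rw [mem_pairComponent_iff_of_mem (H.mul_mem hh hsH)]
    exact K.mul_mem_cancel_right (Subgroup.subset_closure ⟨hsH, .inl ⟨hs, hsH⟩⟩)
  have hhs : h * s ∉ H := fun h' => hsH ((H.mul_mem_cancel_left hh).1 h')
  refine ⟨?_, fun hK => .inr ⟨s, ⟨hs, hsH⟩, by simpa using hK⟩⟩
  rintro (hK | ⟨t, ⟨htS, htH⟩, hK⟩)
  · exact absurd (closure_pairGenerators_le hK) hhs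
  · rw [mul_assoc] at hK
    have hst : s * t⁻¹ ∈ H := (H.mul_mem_cancel_left hh).1 (closure_pairGenerators_le hK)
    have hstK : s * t⁻¹ ∈ K :=
      Subgroup.subset_closure ⟨hst, .inr ⟨s, ⟨hs, hsH⟩, t⁻¹, by simpa using ⟨htS, htH⟩, rfl⟩⟩
    exact (K.mul_mem_cancel_right hstK).1 hK

lemma pairGraph_adj_mem_pairComponent_iff {x y : G} (hxy : (pairGraph H S).Adj x y) :
    x ∈ pairComponent H S ↔ y ∈ pairComponent H S := by
  rw [pairGraph, SimpleGraph.fromRel_adj] at hxy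
  obtain ⟨-, ⟨h, hh, s, hs, rfl, rfl⟩ | ⟨h, hh, s, hs, rfl, rfl⟩⟩ := hxy
  · exact (mul_mem_pairComponent_iff hh hs).symm
  · exact mul_mem_pairComponent_iff hh hs

lemma pairGraph_reachable_one_iff {x : G} :
    (pairGraph H S).Reachable 1 x ↔ x ∈ pairComponent H S := by
  constructor
  · intro hx
    rw [SimpleGraph.reachable_iff_reflTransGen] at hx
    induction hx with
    | refl => exact .inl (Subgroup.one_mem _)
    | tail _ hyz ih => exact (pairGraph_adj_mem_pairComponent_iff hyz).1 ih
  · rintro (hK | ⟨t, ⟨htS, -⟩, hK⟩)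
    · exact pairGraph_reachable_one_of_mem_closure hK
    · simpa using (pairGraph_reachable_one_of_mem_closure hK).trans
        (pairGraph_reachable_mul (closure_pairGenerators_le hK) htS)

lemma pairComponent_eq_univ_iff :
    pairComponent H S = Set.univ ↔
      Subgroup.closure (pairGenerators H S) = H ∧ ∀ x : G, x ∉ H → ∃ s ∈ S, s * x⁻¹ ∈ H := by
  simp only [Set.eq_univ_iff_forall]
  constructor
  · intro hC
    refine ⟨le_antisymm closure_pairGenerators_le
      fun h hh => (mem_pairComponent_iff_of_mem hh).1 (hC h), fun x hx => ?_⟩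
    obtain hK | ⟨s, ⟨hs, -⟩, hK⟩ := hC x
    · exact absurd (closure_pairGenerators_le hK) hx
    · exact ⟨s, hs, by simpa using H.inv_mem (closure_pairGenerators_le hK)⟩
  · rintro ⟨hKH, hcoset⟩ x
    by_cases hx : x ∈ H
    · exact .inl (hKH.ge hx)
    obtain ⟨s, hs, hsx⟩ := hcoset x hx
    have hsH : s ∉ H := fun h' => hx (by simpa using H.mul_mem (H.inv_mem hsx) h')
    exact .inr ⟨s, ⟨hs, hsH⟩, hKH.ge (by simpa using H.inv_mem hsx)⟩

end PairGraph

theorem pairGraph_connected_iff_general {G : Type*} [Group G]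
    (H : Subgroup G) (S : Set G) :
    (pairGraph H S).Connected ↔
      (Subgroup.closure ((H : Set G) ∩
          ((S ∩ (H : Set G)) ∪ ((S \ (H : Set G)) * (S \ (H : Set G))⁻¹))) = H ∧
        ∀ x : G, x ∉ H → ∃ s ∈ S, s * x⁻¹ ∈ H) := by
  have hconn : (pairGraph H S).Connected ↔ ∀ x, (pairGraph H S).Reachable 1 x := by
    rw [SimpleGraph.connected_iff_exists_forall_reachable]
    exact ⟨fun ⟨v, hv⟩ x => (hv 1).symm.trans (hv x), fun h => ⟨1, h⟩⟩
  rw [hconn]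
  exact (forall_congr' fun x => pairGraph_reachable_one_iff).trans
    (Set.eq_univ_iff_forall.symm.trans pairComponent_eq_univ_iff)

/-- the pair graph is connected iff
`⟨H ∩ ((S ∩ H) ∪ S_O·S_O⁻¹)⟩ = H` (where `S_O = S \ H`) and `S` contains a
representative of every right coset of `H` other than `H`. -/
theorem pairGraph_connected_iff {G : Type*} [Group G] [Fintype G]
    (H : Subgroup G) (S : Set G)
    (hsym : (S ∩ (H : Set G))⁻¹ = S ∩ (H : Set G)) :
    (pairGraph H S).Connected ↔
      (Subgroup.closure ((H : Set G) ∩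
          ((S ∩ (H : Set G)) ∪ ((S \ (H : Set G)) * (S \ (H : Set G))⁻¹))) = H ∧
        ∀ x : G, x ∉ H → ∃ s ∈ S, s * x⁻¹ ∈ H) :=
  pairGraph_connected_iff_general H S
end

section
/- For a nontrivial pair graph G(G,H,S), 0 is an eigenvalue of the adjacency matrix with multiplicity at least |G| − |H| − min(|⋃_{s ∈ S_O} Hs|, |H|), where S_O = S \ H. -/
open scoped Pointwise Classical

namespace Matrix

variable {m n R : Type*} [Fintype n] [Field R]

theorem rank_add_le (A B : Matrix m n R) : (A + B).rank ≤ A.rank + B.rank := by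
  rw [rank, mulVecLin_add]
  exact (Submodule.finrank_mono (LinearMap.range_add_le _ _)).trans
    (Submodule.finrank_add_le_finrank_add_finrank _ _)

theorem rank_le_card_of_col_support_subset [Fintype m] (A : Matrix m n R) (s : Finset n)
    (hz : Function.support A.col ⊆ s) : A.rank ≤ s.card := by
  rw [← rank_transpose]
  exact rank_le_card_of_support_subset Aᵀ s hz

theorem rank_le_card_add_min [Fintype m] (A : Matrix m n R) (F K : Finset m) (C : Finset n)
    (h : ∀ i j, i ∉ F → A i j ≠ 0 → i ∈ K ∧ j ∈ C) :
    A.rank ≤ F.card + min K.card C.card := by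
  set A₁ : Matrix m n R := of fun i j => if i ∈ F then A i j else 0
  set A₂ : Matrix m n R := of fun i j => if i ∈ F then 0 else A i j
  have hA : A = A₁ + A₂ := by
    ext i j; by_cases hi : i ∈ F <;> simp [A₁, A₂, hi]
  have hA₁ : A₁.rank ≤ F.card := by
    refine rank_le_card_of_support_subset _ _ fun i hi => ?_
    by_contra hiF
    exact hi (funext fun j => by simp [A₁, Finset.mem_coe.not.mp hiF])
  have hA₂K : A₂.rank ≤ K.card := by
    refine rank_le_card_of_support_subset _ _ fun i hi => ?_
    obtain ⟨j, hj⟩ := Function.ne_iff.mp hi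
    have hiF : i ∉ F := fun hiF => hj (by simp [A₂, hiF])
    exact (h i j hiF (by simpa [A₂, hiF] using hj)).1
  have hA₂C : A₂.rank ≤ C.card := by
    refine rank_le_card_of_col_support_subset _ _ fun j hj => ?_
    obtain ⟨i, hi⟩ := Function.ne_iff.mp hj
    have hiF : i ∉ F := fun hiF => hi (by simp [A₂, hiF])
    exact (h i j hiF (by simpa [A₂, hiF] using hi)).2
  calc A.rank ≤ A₁.rank + A₂.rank := hA ▸ rank_add_le A₁ A₂
    _ ≤ F.card + min K.card C.card := add_le_add hA₁ (le_min hA₂K hA₂C)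

theorem finrank_ker_toLin' [Fintype m] [DecidableEq n] (A : Matrix m n R) :
    Module.finrank R (LinearMap.ker (toLin' A)) = Fintype.card n - A.rank := by
  have := LinearMap.finrank_range_add_finrank_ker (toLin' A)
  rw [Module.finrank_fintype_fun_eq_card] at this
  rw [rank, ← Matrix.toLin'_apply']
  omega

end Matrix

lemma pairGraph_adj_of_notMem {G : Type*} [Group G] {H : Subgroup G} {S : Set G} {x y : G}
    (hadj : (pairGraph H S).Adj y x) (hy : y ∉ H) :
    y ∈ ⋃ s ∈ S \ (H : Set G), (H : Set G) * {s} ∧ x ∈ H := by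
  rcases hadj.2 with ⟨h, hh, s, hs, rfl, rfl⟩ | ⟨h, hh, s, hs, rfl, rfl⟩
  · exact absurd hh hy
  · have hsH : s ∉ H := fun hsH => hy (H.mul_mem hh hsH)
    exact ⟨Set.mem_biUnion ⟨hs, hsH⟩ (Set.mul_mem_mul hh rfl), hh⟩

theorem pairGraph_zero_eigenvalue_multiplicity_general {G : Type*} [Group G] [Fintype G]
    (H : Subgroup G) (S : Set G)
    (T : Module.End ℝ (G → ℝ))
    (hT : T = Matrix.toLin' ((pairGraph H S).adjMatrix ℝ)) :
    Fintype.card G - Nat.card H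
        - min (⋃ s ∈ S \ (H : Set G), (H : Set G) * {s}).ncard (Nat.card H)
      ≤ Module.finrank ℝ (Module.End.eigenspace T 0) := by
  set U := ⋃ s ∈ S \ (H : Set G), (H : Set G) * {s}
  have hrank : ((pairGraph H S).adjMatrix ℝ).rank
      ≤ Nat.card H + min U.ncard (Nat.card H) := by
    have hH : Nat.card H = (H : Set G).toFinset.card := by simp [Nat.card_eq_fintype_card]
    rw [hH, Set.ncard_eq_toFinset_card' U]
    refine Matrix.rank_le_card_add_min _ _ _ _ fun y x hy hyx => ?_
    simp only [Set.mem_toFinset, SetLike.mem_coe] at hy ⊢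
    exact pairGraph_adj_of_notMem (by simpa using hyx) hy
  rw [Module.End.eigenspace_zero, hT, Matrix.finrank_ker_toLin']
  omega

/-- for a nontrivial pair graph, `0` is an eigenvalue with
multiplicity at least `|G| − |H| − min(|⋃_{s ∈ S_O} Hs|, |H|)`. -/
theorem pairGraph_zero_eigenvalue_multiplicity {G : Type*} [Group G] [Fintype G]
    (H : Subgroup G) (S : Set G) (hS : S.Nonempty) (hH : H ≠ ⊤)
    (hsym : (S ∩ (H : Set G))⁻¹ = S ∩ (H : Set G))
    (T : Module.End ℝ (G → ℝ))
    (hT : T = Matrix.toLin' ((pairGraph H S).adjMatrix ℝ)) :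
    Fintype.card G - Nat.card H
        - min (⋃ s ∈ S \ (H : Set G), (H : Set G) * {s}).ncard (Nat.card H)
      ≤ Module.finrank ℝ (Module.End.eigenspace T 0) :=
  pairGraph_zero_eigenvalue_multiplicity_general H S T hT
end

section
/- Let H ≤ G with [G:H] = 2 and |H| = n, and S ⊆ G \ H with the pair graph G(G,H,S) connected. If |S| ≥ n + 2 − 2√n, then G(G,H,S) is a bipartite Ramanujan graph, i.e., every eigenvalue μ of its adjacency matrix other than ±|S| satisfies |μ| ≤ 2√(|S|−1). -/
open scoped Pointwise Classical

/-!
Colour the vertices by the coset of `H`. Each edge joins `H` to `G \ H`, and the graph is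
`|S|`-regular, so an eigenvector `v` for an eigenvalue `μ ≠ ±|S|` is orthogonal to the constant
vector and to the `±1` sign vector of the bipartition; hence `v` sums to zero on each of the two
parts, both of size `n`. At a vertex `x` where `|v|` is maximal, `μ v(x)` is the sum of `v` over
the `|S|` neighbours of `x`, i.e. minus its sum over the `n - |S|` other vertices of the opposite
part, so `|μ| ≤ n - |S|`. The size hypothesis makes `n - |S| ≤ 2√n - 2 ≤ 2√(|S| - 1)`.
-/

open Matrix SimpleGraph Finset

theorem Matrix.IsSymm.dotProduct_eq_zero_of_mulVec_eq_smul {ι R : Type*} [Fintype ι]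
    [CommRing R] [IsDomain R] {A : Matrix ι ι R} (hA : A.IsSymm) {v w : ι → R} {μ ν : R}
    (hv : A *ᵥ v = μ • v) (hw : A *ᵥ w = ν • w) (hne : μ ≠ ν) : v ⬝ᵥ w = 0 := by
  have h : μ * (v ⬝ᵥ w) = ν * (v ⬝ᵥ w) :=
    calc μ * (v ⬝ᵥ w) = (A *ᵥ v) ⬝ᵥ w := by rw [hv, smul_dotProduct, smul_eq_mul]
      _ = v ⬝ᵥ (A *ᵥ w) := by rw [dotProduct_mulVec, ← mulVec_transpose, hA.eq]
      _ = ν * (v ⬝ᵥ w) := by rw [hw, dotProduct_smul, smul_eq_mul]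
  exact (mul_eq_mul_right_iff.1 h).resolve_left hne

theorem Real.sub_le_two_mul_sqrt_sub_one {n k : ℝ} (hn : 0 ≤ n) (hk : n + 2 - 2 * √n ≤ k) :
    n - k ≤ 2 * √(k - 1) := by
  have hsq : √n ^ 2 = n := Real.sq_sqrt hn
  have hroot : √n - 1 ≤ √(k - 1) :=
    calc √n - 1 ≤ |√n - 1| := le_abs_self _
      _ = √((√n - 1) ^ 2) := (Real.sqrt_sq_eq_abs _).symm
      _ ≤ √(k - 1) := Real.sqrt_le_sqrt (by nlinarith)
  linarith

namespace SimpleGraph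

variable {V : Type*} [Fintype V] (Γ : SimpleGraph V) [DecidableRel Γ.Adj]

theorem abs_eigenvalue_le_card_sdiff_neighborFinset {μ : ℝ} {v : V → ℝ}
    (hv : Γ.adjMatrix ℝ *ᵥ v = μ • v) {x : V} (hx : v x ≠ 0) (hmax : ∀ y, |v y| ≤ |v x|)
    {O : Finset V} (hO : Γ.neighborFinset x ⊆ O) (hsum : ∑ y ∈ O, v y = 0) :
    |μ| ≤ #(O \ Γ.neighborFinset x) := by
  have hrest : μ * v x = -∑ y ∈ O \ Γ.neighborFinset x, v y := by
    have hx := congrFun hv x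
    rw [adjMatrix_mulVec_apply, Pi.smul_apply, smul_eq_mul] at hx
    linarith [Finset.sum_sdiff hO (f := v)]
  have h : |μ| * |v x| ≤ #(O \ Γ.neighborFinset x) * |v x| :=
    calc |μ| * |v x| = |∑ y ∈ O \ Γ.neighborFinset x, v y| := by rw [← abs_mul, hrest, abs_neg]
      _ ≤ ∑ y ∈ O \ Γ.neighborFinset x, |v y| := abs_sum_le_sum_abs _ _
      _ ≤ ∑ _y ∈ O \ Γ.neighborFinset x, |v x| := sum_le_sum fun y _ => hmax y
      _ = #(O \ Γ.neighborFinset x) * |v x| := by rw [sum_const, nsmul_eq_mul]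
  exact le_of_mul_le_mul_right h (abs_pos.2 hx)

variable {Γ} {k : ℕ} {s : Finset V}

theorem adjMatrix_mulVec_sign_of_isBipartiteWith (hreg : Γ.IsRegularOfDegree k)
    (hbip : Γ.IsBipartiteWith s ↑sᶜ) :
    Γ.adjMatrix ℝ *ᵥ (fun x => if x ∈ s then 1 else -1) =
      (-k : ℝ) • fun x => if x ∈ s then 1 else -1 := by
  ext x
  rw [adjMatrix_mulVec_apply, Pi.smul_apply, smul_eq_mul]
  by_cases hx : x ∈ s
  · have hN := isBipartiteWith_neighborFinset_subset hbip hx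
    rw [sum_congr rfl fun y hy => if_neg (mem_compl.1 (hN hy)), sum_const,
      card_neighborFinset_eq_degree, hreg.degree_eq, if_pos hx]
    simp
  · have hN := isBipartiteWith_neighborFinset_subset' hbip (mem_compl.2 hx)
    rw [sum_congr rfl fun y hy => if_pos (hN hy), sum_const,
      card_neighborFinset_eq_degree, hreg.degree_eq, if_neg hx]
    simp

theorem sum_eq_zero_of_mulVec_eq_smul_of_isBipartiteWith (hreg : Γ.IsRegularOfDegree k)
    (hbip : Γ.IsBipartiteWith s ↑sᶜ) {μ : ℝ} {v : V → ℝ} (hv : Γ.adjMatrix ℝ *ᵥ v = μ • v)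
    (hk : μ ≠ k) (hmk : μ ≠ -k) : ∑ x ∈ s, v x = 0 ∧ ∑ x ∈ sᶜ, v x = 0 := by
  have hone : v ⬝ᵥ (fun _ => 1) = 0 :=
    Γ.isSymm_adjMatrix.dotProduct_eq_zero_of_mulVec_eq_smul hv
      (by ext x; simp [hreg.degree_eq]) hk
  have hsign : v ⬝ᵥ (fun x => if x ∈ s then 1 else -1) = 0 :=
    Γ.isSymm_adjMatrix.dotProduct_eq_zero_of_mulVec_eq_smul hv
      (adjMatrix_mulVec_sign_of_isBipartiteWith hreg hbip) hmk
  have hadd : ∑ x ∈ s, v x + ∑ x ∈ sᶜ, v x = 0 := by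
    rw [sum_add_sum_compl]; simpa [dotProduct] using hone
  have hsub : ∑ x ∈ s, v x - ∑ x ∈ sᶜ, v x = 0 := by
    rw [← hsign, dotProduct, ← sum_add_sum_compl s, sub_eq_add_neg, ← sum_neg_distrib]
    congr 1 <;> refine sum_congr rfl fun x hx => ?_
    · simp [hx]
    · simp [mem_compl.1 hx]
  constructor <;> linarith

theorem abs_eigenvalue_le_of_isBipartiteWith (hreg : Γ.IsRegularOfDegree k)
    (hbip : Γ.IsBipartiteWith s ↑sᶜ) (hcard : Fintype.card V = 2 * #s) {μ : ℝ}
    (hμ : Module.End.HasEigenvalue (toLin' (Γ.adjMatrix ℝ)) μ) (hk : μ ≠ k) (hmk : μ ≠ -k) :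
    |μ| ≤ #s - k := by
  obtain ⟨v, hv⟩ := hμ.exists_hasEigenvector
  have hAv : Γ.adjMatrix ℝ *ᵥ v = μ • v := by simpa [toLin'_apply] using hv.apply_eq_smul
  obtain ⟨hs, hsc⟩ := sum_eq_zero_of_mulVec_eq_smul_of_isBipartiteWith hreg hbip hAv hk hmk
  obtain ⟨z, hz⟩ := Function.ne_iff.1 hv.2
  have : Nonempty V := ⟨z⟩
  obtain ⟨x, hmax⟩ := Finite.exists_max fun y => |v y|
  have hx : v x ≠ 0 := abs_pos.1 ((abs_pos.2 hz).trans_le (hmax z))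
  obtain ⟨O, hO, hOcard, hOsum⟩ :
      ∃ O, Γ.neighborFinset x ⊆ O ∧ #O = #s ∧ ∑ y ∈ O, v y = 0 := by
    by_cases hxs : x ∈ s
    · refine ⟨sᶜ, isBipartiteWith_neighborFinset_subset hbip hxs, ?_, hsc⟩
      rw [card_compl]; omega
    · exact ⟨s, isBipartiteWith_neighborFinset_subset' hbip (mem_compl.2 hxs), rfl, hs⟩
  calc |μ| ≤ #(O \ Γ.neighborFinset x) :=
        Γ.abs_eigenvalue_le_card_sdiff_neighborFinset hAv hx hmax hO hOsum
    _ = #s - k := by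
      rw [card_sdiff_of_subset hO, Nat.cast_sub (card_le_card hO), hOcard,
        card_neighborFinset_eq_degree, hreg.degree_eq]

end SimpleGraph

section PairGraph

variable {G : Type*} [Group G] {H : Subgroup G} {S : Set G}

theorem pairGraph_adj_iff (hSH : ∀ s ∈ S, s ∉ H) {x y : G} :
    (pairGraph H S).Adj x y ↔ (x ∈ H ∧ x⁻¹ * y ∈ S) ∨ (y ∈ H ∧ y⁻¹ * x ∈ S) := by
  have hrel : ∀ a b : G, (∃ h ∈ (H : Set G), ∃ s ∈ S, a = h ∧ b = h * s) ↔
      a ∈ H ∧ a⁻¹ * b ∈ S := by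
    refine fun a b => ⟨?_, fun ⟨ha, hab⟩ => ⟨a, ha, _, hab, rfl, (mul_inv_cancel_left a b).symm⟩⟩
    rintro ⟨h, hh, s, hs, rfl, rfl⟩
    exact ⟨hh, by simpa using hs⟩
  rw [pairGraph, fromRel_adj, hrel, hrel]
  refine and_iff_right_of_imp ?_
  rintro (⟨-, h⟩ | ⟨-, h⟩) rfl <;> exact hSH _ h (by simp)

theorem pairGraph_isBipartiteWith (hSH : ∀ s ∈ S, s ∉ H) :
    (pairGraph H S).IsBipartiteWith H (H : Set G)ᶜ where
  disjoint := disjoint_compl_right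
  mem_of_adj x y hxy := by
    have hcross : ∀ {a b : G}, a ∈ H → a⁻¹ * b ∈ S → b ∉ H :=
      fun ha hab hb => hSH _ hab (H.mul_mem (H.inv_mem ha) hb)
    rcases (pairGraph_adj_iff hSH).1 hxy with ⟨hx, h⟩ | ⟨hy, h⟩
    · exact Or.inl ⟨hx, hcross hx h⟩
    · exact Or.inr ⟨hcross hy h, hy⟩

theorem pairGraph_neighborSet_of_mem (hSH : ∀ s ∈ S, s ∉ H) {x : G} (hx : x ∈ H) :
    (pairGraph H S).neighborSet x = (x * ·) '' S := by
  ext y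
  rw [mem_neighborSet, pairGraph_adj_iff hSH, Set.mem_image]
  constructor
  · rintro (⟨-, h⟩ | ⟨hy, h⟩)
    · exact ⟨_, h, mul_inv_cancel_left x y⟩
    · exact absurd (H.mul_mem (H.inv_mem hy) hx) (hSH _ h)
  · rintro ⟨s, hs, rfl⟩
    exact Or.inl ⟨hx, by simpa using hs⟩

theorem pairGraph_neighborSet_of_notMem (hindex : H.index = 2) (hSH : ∀ s ∈ S, s ∉ H) {x : G}
    (hx : x ∉ H) : (pairGraph H S).neighborSet x = (fun s => x * s⁻¹) '' S := by
  ext y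
  rw [mem_neighborSet, pairGraph_adj_iff hSH, Set.mem_image]
  constructor
  · rintro (⟨hx', -⟩ | ⟨-, h⟩)
    · exact absurd hx' hx
    · exact ⟨_, h, by group⟩
  · rintro ⟨s, hs, rfl⟩
    have hsinv : s⁻¹ ∉ H := fun h => hSH s hs (by simpa using H.inv_mem h)
    refine Or.inr ⟨(H.mul_mem_iff_of_index_two hindex).2 (iff_of_false hx hsinv), ?_⟩
    simpa using hs

theorem pairGraph_isRegularOfDegree [Fintype G] (hindex : H.index = 2) (hSH : ∀ s ∈ S, s ∉ H) :
    (pairGraph H S).IsRegularOfDegree S.ncard := by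
  intro x
  rw [← card_neighborSet_eq_degree, ← Nat.card_eq_fintype_card, Nat.card_coe_set_eq]
  by_cases hx : x ∈ H
  · rw [pairGraph_neighborSet_of_mem hSH hx, Set.ncard_image_of_injective _ (mul_right_injective x)]
  · rw [pairGraph_neighborSet_of_notMem hindex hSH hx]
    exact Set.ncard_image_of_injective _ ((mul_right_injective x).comp inv_injective)

end PairGraph

theorem pairGraph_ramanujan_of_large_general {G : Type*} [Group G] [Fintype G]
    (H : Subgroup G) (S : Set G)
    (hindex : H.index = 2)
    (n : ℕ) (hn : Nat.card H = n)
    (hSH : ∀ s ∈ S, s ∉ H)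
    (hsize : (S.ncard : ℝ) ≥ (n : ℝ) + 2 - 2 * Real.sqrt n) :
    (pairGraph H S).Colorable 2 ∧
    ∀ μ : ℝ, Module.End.HasEigenvalue
        (Matrix.toLin' ((pairGraph H S).adjMatrix ℝ)) μ →
      μ ≠ (S.ncard : ℝ) → μ ≠ -(S.ncard : ℝ) →
      |μ| ≤ 2 * Real.sqrt ((S.ncard : ℝ) - 1) := by
  have hbip := pairGraph_isBipartiteWith hSH
  refine ⟨hbip.isBipartite, fun μ hμ hk hmk => ?_⟩
  have hcard : Fintype.card G = 2 * #(H : Set G).toFinset := by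
    rw [Set.toFinset_card, ← Nat.card_eq_fintype_card, ← Nat.card_eq_fintype_card,
      ← H.index_mul_card, hindex, SetLike.coe_sort_coe]
  have hμn : |μ| ≤ n - S.ncard := by
    have := abs_eigenvalue_le_of_isBipartiteWith (pairGraph_isRegularOfDegree hindex hSH)
      (s := (H : Set G).toFinset) (by simpa using hbip) hcard hμ hk hmk
    rwa [Set.toFinset_card, ← Nat.card_eq_fintype_card, SetLike.coe_sort_coe, hn] at this
  exact hμn.trans (Real.sub_le_two_mul_sqrt_sub_one n.cast_nonneg hsize)

/-- with `[G:H] = 2`, `|H| = n`, `S ⊆ G \ H`, if the pair graph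
is connected and `|S| ≥ n + 2 − 2√n`, then it is a bipartite Ramanujan graph:
every eigenvalue `μ ≠ ±|S|` of its adjacency matrix satisfies
`|μ| ≤ 2√(|S|−1)`. -/
theorem pairGraph_ramanujan_of_large {G : Type*} [Group G] [Fintype G]
    (H : Subgroup G) (S : Set G) (hS : S.Nonempty)
    (hindex : H.index = 2)
    (n : ℕ) (hn : Nat.card H = n)
    (hSH : ∀ s ∈ S, s ∉ H)
    (hconn : (pairGraph H S).Connected)
    (hsize : (S.ncard : ℝ) ≥ (n : ℝ) + 2 - 2 * Real.sqrt n) :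
    (pairGraph H S).Colorable 2 ∧
    ∀ μ : ℝ, Module.End.HasEigenvalue
        (Matrix.toLin' ((pairGraph H S).adjMatrix ℝ)) μ →
      μ ≠ (S.ncard : ℝ) → μ ≠ -(S.ncard : ℝ) →
      |μ| ≤ 2 * Real.sqrt ((S.ncard : ℝ) - 1) :=
  pairGraph_ramanujan_of_large_general H S hindex n hn hSH hsize
end
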